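/- arXiv:0907.2157 — 2 statements merged into one kernel-verified Lean document; each statement's English description precedes it below -/
import Mathlib

section
/- No two distinct prime words u, v with |u| < |v| can have their squares u^2 and v^2 centered at the same inter-position of a string: if u^2 and v^2 are both centered at inter-position i of a word s, and both u and v are prime words, then u = v. -/
def listPow {A : Type*} (r : List A) (k : ℕ) : List A :=
  (List.replicate k r).flatten

def Primitive {A : Type*} (u : List A) : Prop :=
  u ≠ [] ∧ ∀ (r : List A) (k : ℕ), u = listPow r k → u = r

def PrimeWord {A : Type*} [LinearOrder A] (u : List A) : Prop :=
  Primitive u ∧ ((∀ v, u ~r v → u ≤ v) ∨ (∀ v, u ~r v → v ≤ u))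

def SquareCentered {A : Type*} (s x : List A) (i : ℕ) : Prop :=
  x <:+ s.take i ∧ x <+: s.drop i

/-! If `|u| ≤ |v|`, the two centered squares make `u` both a prefix and a suffix of `v`, say
`v = u w = w' u`. Comparing `v` with its rotations `w u` and `u w'` in the lexicographic order
(extremality of `v`) forces `w = w'`, so `u` and `w` commute and are powers of a common word;
primitivity of `v` then leaves only `w = []`, i.e. `u = v`. -/

section ListPow

variable {α : Type*}

theorem listPow_zero (r : List α) : listPow r 0 = [] := rfl

theorem listPow_add (r : List α) (k l : ℕ) :
    listPow r (k + l) = listPow r k ++ listPow r l := by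
  rw [listPow, List.replicate_add, List.flatten_append]; rfl

theorem length_listPow (r : List α) (k : ℕ) : (listPow r k).length = k * r.length := by
  simp [listPow]

theorem exists_listPow_of_append_comm {a b : List α} (h : a ++ b = b ++ a) :
    ∃ r k l, a = listPow r k ∧ b = listPow r l := by
  induction hn : a.length + b.length using Nat.strong_induction_on generalizing a b with
  | _ n ih =>
  wlog hle : a.length ≤ b.length generalizing a b
  · obtain ⟨r, k, l, ha, hb⟩ := this h.symm (by omega) (by omega)
    exact ⟨r, l, k, hb, ha⟩
  by_cases ha : a = []
  · exact ⟨b, 0, 1, ha, by simp [listPow]⟩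
  obtain ⟨c, rfl⟩ : a <+: b := List.prefix_of_prefix_length_le ⟨b, rfl⟩ ⟨a, h.symm⟩ hle
  have hc : a ++ c = c ++ a := List.append_cancel_left (h.trans (List.append_assoc a c a))
  have hlt : a.length + c.length < n := by
    have := List.length_pos_iff.2 ha
    simp only [List.length_append] at hn
    omega
  obtain ⟨r, k, l, ha, hc⟩ := ih _ hlt hc rfl
  exact ⟨r, k, k + l, ha, by rw [ha, hc, listPow_add]⟩

theorem Primitive.eq_nil_or_eq_nil_of_append_comm {u w : List α} (hp : Primitive (u ++ w))
    (h : u ++ w = w ++ u) : u = [] ∨ w = [] := by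
  obtain ⟨r, k, l, rfl, rfl⟩ := exists_listPow_of_append_comm h
  have hr := hp.2 r (k + l) (listPow_add r k l).symm
  have hlen : (k + l) * r.length = 1 * r.length := by
    rw [← length_listPow, listPow_add, hr, one_mul]
  have hpos : 0 < r.length := List.length_pos_iff.2 (hr ▸ hp.1)
  rcases Nat.add_eq_one_iff.1 (Nat.eq_of_mul_eq_mul_right hpos hlen) with ⟨rfl, -⟩ | ⟨-, rfl⟩
  · exact .inl (listPow_zero r)
  · exact .inr (listPow_zero r)

end ListPow

section Lex

variable {α : Type*}

theorem List.Lex.append_of_length_eq {r : α → α → Prop} {a b : List α} (h : List.Lex r a b)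
    (hl : a.length = b.length) (c d : List α) : List.Lex r (a ++ c) (b ++ d) := by
  induction h with
  | nil => simp at hl
  | rel hab => exact .rel hab
  | cons _ ih => exact .cons (ih (by simpa using hl))

variable [LinearOrder α]

theorem List.le_of_append_le_append_left {s t₁ t₂ : List α} (h : s ++ t₁ ≤ s ++ t₂) :
    t₁ ≤ t₂ :=
  le_of_not_gt fun hlt => not_le_of_gt (List.append_left_lt hlt) h

theorem List.le_of_append_le_append_of_length_eq {a b c d : List α} (h : a ++ c ≤ b ++ d)
    (hl : a.length = b.length) : a ≤ b :=
  le_of_not_gt fun hlt => not_le_of_gt (hlt.append_of_length_eq hl.symm d c) h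

end Lex

theorem PrimeWord.eq_of_isPrefix_of_isSuffix {α : Type*} [LinearOrder α] {u v : List α}
    (hv : PrimeWord v) (hu : u ≠ []) (hp : u <+: v) (hs : u <:+ v) : u = v := by
  obtain ⟨w, rfl⟩ := hp
  obtain ⟨w', hw'⟩ := hs
  have hl : w.length = w'.length := by
    have := congrArg List.length hw'
    simp only [List.length_append] at this
    omega
  have hrot : u ++ w ~r w ++ u := List.isRotated_append
  have hrot' : u ++ w ~r u ++ w' := hw' ▸ List.isRotated_append
  have eq_of_rotations_le : ∀ {x y : List α}, x.length = y.length →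
      u ++ x ≤ u ++ y → y ++ u ≤ x ++ u → x = y :=
    fun hxy h₁ h₂ => le_antisymm (List.le_of_append_le_append_left h₁)
      (List.le_of_append_le_append_of_length_eq h₂ hxy.symm)
  have hww' : w = w' := by
    rcases hv.2 with hmin | hmax
    · exact eq_of_rotations_le hl (hmin _ hrot') (hw' ▸ hmin _ hrot)
    · exact (eq_of_rotations_le hl.symm (hmax _ hrot') (hw' ▸ hmax _ hrot)).symm
  subst hww'
  rcases hv.1.eq_nil_or_eq_nil_of_append_comm hw'.symm with rfl | rfl
  · exact absurd rfl hu
  · exact (List.append_nil u).symm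

/-- Two prime words whose squares are centered at the same inter-position of a
word `s` must be equal. -/
theorem prime_squares_same_center_eq {A : Type*} [LinearOrder A]
    (s u v : List A) (i : ℕ) (hu : PrimeWord u) (hv : PrimeWord v)
    (hcu : SquareCentered s u i) (hcv : SquareCentered s v i) : u = v := by
  wlog hle : u.length ≤ v.length generalizing u v
  · exact (this v u hv hu hcv hcu (by omega)).symm
  exact hv.eq_of_isPrefix_of_isSuffix hu.1.1 (List.prefix_of_prefix_length_le hcu.2 hcv.2 hle)
    (List.suffix_of_suffix_length_le hcu.1 hcv.1 hle)
end

section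
/- To each hp-run v with shortest period p one can assign at least 2 inter-positions (handles) within v, such that the handle sets of distinct hp-runs are disjoint; consequently the number of hp-runs in a word of length n is at most (n-1)/2. -/
def HasPeriodOn {A : Type*} (u : ℕ → A) (i j p : ℕ) : Prop :=
  ∀ k, i ≤ k → k + p ≤ j → u k = u (k + p)

def IsRunWith {A : Type*} (u : ℕ → A) (n i j p : ℕ) : Prop :=
  i ≤ j ∧ j < n ∧ 1 ≤ p ∧ HasPeriodOn u i j p ∧
    (∀ q, 1 ≤ q → q < p → ¬ HasPeriodOn u i j q) ∧
    2 * p ≤ j - i + 1 ∧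
    (i = 0 ∨ u (i - 1) ≠ u (i - 1 + p)) ∧
    (j + 1 = n ∨ u (j + 1 - p) ≠ u (j + 1))

def IsHPRun {A : Type*} (u : ℕ → A) (n i j : ℕ) : Prop :=
  ∃ p, IsRunWith u n i j p ∧ 3 * p ≤ j - i + 1

/-!
Fix any linear order on the alphabet. Call an inter-position `k` a handle of a run `[i..j]` of
period `p` if a full period fits on both sides of `k` inside the run and `u[k, k+p)` is unbordered.
Squares of periods `p < q` both centred at `k` make the length-`p` prefix of `u[k, k+q)` one of its
borders, so `k` determines the period, and then maximality of runs determines the run: handles of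
distinct runs are distinct. The lexicographically minimal and maximal rotations of the primitive
period of an hp-run are unbordered (a border makes a rotation agree with a shift of itself on a
prefix, and extremality then forces a smaller period) and distinct, and the cube leaves room for one
handle starting with each of them. Distinct hp-runs thus own disjoint sets of at least two of the
`n - 1` inter-positions.
-/

open Function

section

variable {A : Type*}

theorem Set.mul_ncard_le_card_of_pairwiseDisjoint {ι α : Type*} {S : Set ι} {F : ι → Finset α}
    {t : Finset α} {c : ℕ} (hc : ∀ q ∈ S, c ≤ (F q).card) (ht : ∀ q ∈ S, F q ⊆ t)
    (hd : S.PairwiseDisjoint F) : c * S.ncard ≤ t.card := by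
  classical
  by_cases hS : S.Finite
  · lift S to Finset ι using hS
    rw [Set.ncard_coe_finset, mul_comm, ← smul_eq_mul]
    calc S.card • c ≤ ∑ q ∈ S, (F q).card := Finset.card_nsmul_le_sum _ _ _ hc
      _ = (S.biUnion F).card := (Finset.card_biUnion hd).symm
      _ ≤ t.card := Finset.card_le_card (Finset.biUnion_subset.2 ht)
  · simp [Set.Infinite.ncard hS]

def Unbordered (u : ℕ → A) (k p : ℕ) : Prop :=
  ∀ t, 0 < t → t < p → ∃ l < t, u (k + l) ≠ u (k + (p - t) + l)

theorem Unbordered.congr {u w : ℕ → A} {k x p : ℕ} (h : Unbordered w x p)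
    (huw : ∀ l < p, u (k + l) = w (x + l)) : Unbordered u k p := by
  intro t ht htp
  obtain ⟨l, hl, hne⟩ := h t ht htp
  refine ⟨l, hl, ?_⟩
  rwa [huw l (by omega), add_assoc, huw _ (by omega), ← add_assoc]

theorem Unbordered.le_of_square {u : ℕ → A} {k p q : ℕ} (hub : Unbordered u k q) (hp : 0 < p)
    (hqk : q ≤ k) (hsq : ∀ l < p, u (k - p + l) = u (k + l))
    (hsq' : ∀ l < q, u (k - q + l) = u (k + l)) : q ≤ p := by
  by_contra! hpq
  obtain ⟨l, hl, hne⟩ := hub p hp hpq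
  refine hne ?_
  calc u (k + l) = u (k - p + l) := (hsq l hl).symm
    _ = u (k - q + (q - p + l)) := by congr 1; omega
    _ = u (k + (q - p) + l) := by rw [hsq' _ (by omega), add_assoc]

def shift (w : ℕ → A) (x : ℕ) : ℕ → A := fun m => w (x + m)

theorem Function.Periodic.shift_mod {w : ℕ → A} {p : ℕ} (hw : Periodic w p) (y : ℕ) :
    shift w (y % p) = shift w y := by
  funext m
  simp only [shift]
  rw [← hw.nat_mul (y / p) (y % p + m), Nat.cast_id]
  congr 1
  linarith [Nat.mod_add_div' y p]

theorem Function.Periodic.periodic_of_shift_eq {w : ℕ → A} {p x s : ℕ} (hw : Periodic w p)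
    (hx : x ≤ p) (h : shift w x = shift w (x + s)) : Periodic w s := by
  intro m
  have hm := congrFun h (m + p - x)
  simp only [shift] at hm
  calc w (m + s) = w (m + s + p) := (hw _).symm
    _ = w (x + s + (m + p - x)) := by congr 1; omega
    _ = w (m + p) := by rw [← hm]; congr 1; omega
    _ = w m := hw m

section Lex

variable [LinearOrder A]

theorem toLex_le_of_eq_of_shift_le {a b : ℕ → A} {t : ℕ} (hpre : ∀ l < t, a l = b l)
    (htail : toLex (shift a t) ≤ toLex (shift b t)) : toLex a ≤ toLex b := by
  rcases htail.lt_or_eq with ⟨i, hi, hlt⟩ | heq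
  · refine le_of_lt ⟨t + i, fun l hl => ?_, hlt⟩
    rcases Nat.lt_or_ge l t with hlt | hge
    · exact hpre l hlt
    · simpa [shift, Nat.add_sub_cancel' hge] using hi (l - t) (by omega)
  · refine le_of_eq (congrArg toLex (funext fun l => ?_))
    rcases Nat.lt_or_ge l t with hlt | hge
    · exact hpre l hlt
    · simpa [shift, Nat.add_sub_cancel' hge] using congrFun heq (l - t)

def IsExtremalRotation (w : ℕ → A) (x : ℕ) : Prop :=
  (∀ y, toLex (shift w x) ≤ toLex (shift w y)) ∨ (∀ y, toLex (shift w y) ≤ toLex (shift w x))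

theorem IsExtremalRotation.unbordered {w : ℕ → A} {p x : ℕ} (hx : IsExtremalRotation w x)
    (hw : Periodic w p) (hprim : ∀ t, 0 < t → t < p → ¬ Periodic w t) (hxp : x ≤ p) :
    Unbordered w x p := by
  intro t ht htp
  by_contra! hborder
  -- `shift w (x + (p - t))` starts with the border and then continues as `shift w x`
  have hpre : ∀ l < t, shift w (x + (p - t)) l = shift w x l := fun l hl => (hborder l hl).symm
  have htail_b : shift (shift w (x + (p - t))) t = shift w x := by
    funext m
    simp only [shift]
    rw [show x + (p - t) + (t + m) = x + m + p by omega, hw]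
  have htail_a : shift (shift w x) t = shift w (x + t) := by
    funext m
    simp only [shift, add_assoc]
  have heq : shift w x = shift w (x + (p - t)) := by
    refine toLex.injective ?_
    rcases hx with hmin | hmax
    · refine le_antisymm (hmin _) (toLex_le_of_eq_of_shift_le hpre ?_)
      rw [htail_a, htail_b]
      exact hmin _
    · refine le_antisymm (toLex_le_of_eq_of_shift_le (fun l hl => (hpre l hl).symm) ?_) (hmax _)
      rw [htail_a, htail_b]
      exact hmax _
  exact hprim (p - t) (by omega) (by omega) (hw.periodic_of_shift_eq hxp heq)

theorem Function.Periodic.exists_two_isExtremalRotation {w : ℕ → A} {p : ℕ}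
    (hw : Periodic w p) (hprim : ∀ t, 0 < t → t < p → ¬ Periodic w t) (hp : 1 < p) :
    ∃ x₀ < p, ∃ x₁ < p, x₀ ≠ x₁ ∧ IsExtremalRotation w x₀ ∧ IsExtremalRotation w x₁ := by
  have : NeZero p := ⟨by omega⟩
  obtain ⟨x₀, hx₀⟩ := Finite.exists_min fun x : Fin p => toLex (shift w x)
  obtain ⟨x₁, hx₁⟩ := Finite.exists_max fun x : Fin p => toLex (shift w x)
  have hmin : ∀ y, toLex (shift w x₀) ≤ toLex (shift w y) := fun y => by
    simpa [hw.shift_mod] using hx₀ ⟨y % p, Nat.mod_lt y (by omega)⟩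
  have hmax : ∀ y, toLex (shift w y) ≤ toLex (shift w x₁) := fun y => by
    simpa [hw.shift_mod] using hx₁ ⟨y % p, Nat.mod_lt y (by omega)⟩
  refine ⟨x₀, x₀.2, x₁, x₁.2, fun h => ?_, Or.inl hmin, Or.inr hmax⟩
  have hconst : shift w x₀ = shift w (x₀ + 1) :=
    toLex.injective (le_antisymm (hmin _) (h ▸ hmax _))
  exact hprim 1 one_pos hp (hw.periodic_of_shift_eq x₀.2.le hconst)

end Lex

def periodicExt (u : ℕ → A) (i p : ℕ) : ℕ → A := fun m => u (i + m % p)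

theorem periodic_periodicExt (u : ℕ → A) (i p : ℕ) : Periodic (periodicExt u i p) p := by
  intro m
  simp [periodicExt]

theorem HasPeriodOn.apply_eq_periodicExt {u : ℕ → A} {i j p : ℕ} (h : HasPeriodOn u i j p)
    (hp : 0 < p) : ∀ d, i + d ≤ j → u (i + d) = periodicExt u i p d := by
  intro d
  induction d using Nat.strong_induction_on with
  | _ d ih =>
    intro hd
    rcases Nat.lt_or_ge d p with hlt | hge
    · simp [periodicExt, Nat.mod_eq_of_lt hlt]
    · have hprev := h (i + (d - p)) (by omega) (by omega)
      rw [show i + (d - p) + p = i + d by omega, ih (d - p) (by omega) (by omega)] at hprev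
      rw [← hprev, ← periodic_periodicExt u i p (d - p), Nat.sub_add_cancel hge]

theorem HasPeriodOn.square {u : ℕ → A} {i j p k : ℕ} (h : HasPeriodOn u i j p)
    (hi : i + p ≤ k) (hj : k + p ≤ j + 1) : ∀ l < p, u (k - p + l) = u (k + l) := fun l _ => by
  simpa [show k - p + l + p = k + l by omega] using h (k - p + l) (by omega) (by omega)

structure IsHandle (u : ℕ → A) (i j p k : ℕ) : Prop where
  add_le : i + p ≤ k
  add_le_succ : k + p ≤ j + 1
  unbordered : Unbordered u k p

theorem IsHandle.mem_Ioc {u : ℕ → A} {i j p k : ℕ} (h : IsHandle u i j p k) (hp : 0 < p) :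
    k ∈ Finset.Ioc i j :=
  Finset.mem_Ioc.2 ⟨by have := h.add_le; omega, by have := h.add_le_succ; omega⟩

section Run

variable {u : ℕ → A} {n i j p : ℕ}

theorem IsRunWith.pos (h : IsRunWith u n i j p) : 0 < p := h.2.2.1

theorem IsRunWith.end_lt (h : IsRunWith u n i j p) : j < n := h.2.1

theorem IsRunWith.hasPeriodOn (h : IsRunWith u n i j p) : HasPeriodOn u i j p := h.2.2.2.1

theorem IsRunWith.start_le_of_hasPeriodOn {i' j' : ℕ} (h : IsRunWith u n i j p)
    (h' : HasPeriodOn u i' j' p) (hij' : i + p ≤ j' + 1) : i ≤ i' := by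
  obtain ⟨-, -, -, -, -, -, hleft, -⟩ := h
  by_contra! hlt
  exact hleft.resolve_left (by omega) (h' (i - 1) (by omega) (by omega))

theorem IsRunWith.le_end_of_hasPeriodOn {i' j' : ℕ} (h : IsRunWith u n i j p)
    (h' : HasPeriodOn u i' j' p) (hj'n : j' < n) (hi'j : i' + p ≤ j + 1) : j' ≤ j := by
  obtain ⟨-, -, -, -, -, -, -, hright⟩ := h
  by_contra! hlt
  refine hright.resolve_left (by omega) ?_
  simpa [show j + 1 - p + p = j + 1 by omega] using h' (j + 1 - p) (by omega) (by omega)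

theorem IsRunWith.eq_of_overlap {i' j' : ℕ} (h : IsRunWith u n i j p)
    (h' : IsRunWith u n i' j' p) (hij' : i + p ≤ j' + 1) (hi'j : i' + p ≤ j + 1) :
    i = i' ∧ j = j' :=
  ⟨le_antisymm (h.start_le_of_hasPeriodOn h'.hasPeriodOn hij')
      (h'.start_le_of_hasPeriodOn h.hasPeriodOn hi'j),
    le_antisymm (h'.le_end_of_hasPeriodOn h.hasPeriodOn h.end_lt hij')
      (h.le_end_of_hasPeriodOn h'.hasPeriodOn h'.end_lt hi'j)⟩

theorem IsRunWith.eq_of_isHandle {i' j' p' k : ℕ} (h : IsRunWith u n i j p)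
    (h' : IsRunWith u n i' j' p')
    (hk : IsHandle u i j p k) (hk' : IsHandle u i' j' p' k) : (i, j) = (i', j') := by
  have hsq := h.hasPeriodOn.square hk.add_le hk.add_le_succ
  have hsq' := h'.hasPeriodOn.square hk'.add_le hk'.add_le_succ
  obtain rfl : p = p' := le_antisymm
    (hk.unbordered.le_of_square h'.pos (by have := hk.add_le; omega) hsq' hsq)
    (hk'.unbordered.le_of_square h.pos (by have := hk'.add_le; omega) hsq hsq')
  obtain ⟨rfl, rfl⟩ := h.eq_of_overlap h'
    (by have := hk.add_le; have := hk'.add_le_succ; omega)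
    (by have := hk'.add_le; have := hk.add_le_succ; omega)
  rfl

theorem IsRunWith.not_periodic_periodicExt {t : ℕ} (h : IsRunWith u n i j p) (ht : 0 < t)
    (htp : t < p) : ¬ Periodic (periodicExt u i p) t := by
  obtain ⟨-, -, hp, hper, hmin, -⟩ := h
  intro hw
  refine hmin t ht htp fun k hik hkj => ?_
  have hext := hper.apply_eq_periodicExt hp
  rw [← Nat.add_sub_cancel' hik, hext _ (by omega), add_assoc, hext _ (by omega), hw]

theorem IsRunWith.isHandle_of_isExtremalRotation [LinearOrder A] {x : ℕ}
    (h : IsRunWith u n i j p) (hcube : 3 * p ≤ j - i + 1) (hxp : x < p)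
    (hx : IsExtremalRotation (periodicExt u i p) x) : IsHandle u i j p (i + x + p) where
  add_le := by omega
  add_le_succ := by omega
  unbordered := by
    refine (hx.unbordered (periodic_periodicExt u i p) (fun t => h.not_periodic_periodicExt)
      hxp.le).congr fun l hl => ?_
    rw [show i + x + p + l = i + (x + l + p) by omega,
      h.hasPeriodOn.apply_eq_periodicExt h.pos _ (by omega), periodic_periodicExt]

theorem IsRunWith.exists_handles (h : IsRunWith u n i j p) (hcube : 3 * p ≤ j - i + 1) :
    ∃ s : Finset ℕ, 2 ≤ s.card ∧ ∀ k ∈ s, IsHandle u i j p k := by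
  rcases Nat.lt_or_ge 1 p with hp | hp
  · let _ : LinearOrder A := IsWellOrder.linearOrder WellOrderingRel
    obtain ⟨x₀, hx₀p, x₁, hx₁p, hne, hx₀, hx₁⟩ :=
      (periodic_periodicExt u i p).exists_two_isExtremalRotation
        (fun t => h.not_periodic_periodicExt) hp
    refine ⟨{i + x₀ + p, i + x₁ + p}, (Finset.card_pair (by omega)).ge, ?_⟩
    simp only [Finset.mem_insert, Finset.mem_singleton, forall_eq_or_imp, forall_eq]
    exact ⟨h.isHandle_of_isExtremalRotation hcube hx₀p hx₀,
      h.isHandle_of_isExtremalRotation hcube hx₁p hx₁⟩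
  · obtain rfl : p = 1 := le_antisymm hp h.pos
    refine ⟨{i + 1, i + 2}, (Finset.card_pair (by omega)).ge, fun k hk => ?_⟩
    simp only [Finset.mem_insert, Finset.mem_singleton] at hk
    exact ⟨by omega, by omega, fun t ht htp => absurd htp (by omega)⟩

theorem IsHPRun.exists_handles (h : IsHPRun u n i j) :
    ∃ s : Finset ℕ, 2 ≤ s.card ∧ ∃ p, IsRunWith u n i j p ∧ ∀ k ∈ s, IsHandle u i j p k := by
  obtain ⟨p, hrun, hcube⟩ := h
  obtain ⟨s, hcard, hs⟩ := hrun.exists_handles hcube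
  exact ⟨s, hcard, p, hrun, hs⟩

end Run

end

/-- To each hp-run one can assign a set of at least 2 inter-positions
(handles) lying inside the run, such that the handle sets of distinct
hp-runs are disjoint; consequently a word of length `n` has at most
`(n-1)/2` hp-runs.  (Inter-position `k ∈ Ioc i j` lies between the letters
at 0-based positions `k-1` and `k` of the run `[i..j]`.) -/
theorem hp_runs_handles {A : Type*} (u : ℕ → A) (n : ℕ) :
    (∃ F : ℕ × ℕ → Finset ℕ,
      (∀ i j, IsHPRun u n i j → 2 ≤ (F (i, j)).card ∧
        F (i, j) ⊆ Finset.Ioc i j) ∧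
      (∀ q₁ q₂ : ℕ × ℕ, IsHPRun u n q₁.1 q₁.2 → IsHPRun u n q₂.1 q₂.2 →
        q₁ ≠ q₂ → Disjoint (F q₁) (F q₂))) ∧
    {q : ℕ × ℕ | IsHPRun u n q.1 q.2}.ncard ≤ (n - 1) / 2 := by
  choose! F hcard P hrun hhandle using
    fun q : ℕ × ℕ => IsHPRun.exists_handles (u := u) (n := n) (i := q.1) (j := q.2)
  have hsub : ∀ q : ℕ × ℕ, IsHPRun u n q.1 q.2 → F q ⊆ Finset.Ioc q.1 q.2 :=
    fun q hq k hk => (hhandle q hq k hk).mem_Ioc (hrun q hq).pos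
  have hdisj : ∀ q₁ q₂ : ℕ × ℕ, IsHPRun u n q₁.1 q₁.2 → IsHPRun u n q₂.1 q₂.2 →
      q₁ ≠ q₂ → Disjoint (F q₁) (F q₂) := fun q₁ q₂ h₁ h₂ hne =>
    Finset.disjoint_left.2 fun k hk₁ hk₂ => hne <|
      (hrun q₁ h₁).eq_of_isHandle (hrun q₂ h₂) (hhandle q₁ h₁ k hk₁) (hhandle q₂ h₂ k hk₂)
  refine ⟨⟨F, fun i j h => ⟨hcard (i, j) h, hsub (i, j) h⟩, hdisj⟩, ?_⟩
  have hcount := Set.mul_ncard_le_card_of_pairwiseDisjoint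
    (S := {q : ℕ × ℕ | IsHPRun u n q.1 q.2}) (t := Finset.Ioo 0 n) hcard
    (fun q hq => (hsub q hq).trans <| (Finset.Ioc_subset_Ioo_right (hrun q hq).end_lt).trans <|
      Finset.Ioo_subset_Ioo_left (Nat.zero_le _))
    (fun q₁ h₁ q₂ h₂ => hdisj q₁ q₂ h₁ h₂)
  rw [Nat.card_Ioo] at hcount
  omega
end
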